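/- arXiv:2605.24862 — 3 statements merged into one kernel-verified Lean document; each statement's English description precedes it below -/
import Mathlib

section
/- Consider a finite Markov decision process with state space S, action space A, reward function r bounded by r_max, discount factor γ ∈ [0,1), and two transition kernels P_1 and P_2. For any stationary policy π, the difference in discounted returns satisfies |J_{M_1}(π) − J_{M_2}(π)| ≤ (2γ·r_max/(1−γ)²)·sup_{s,a} D_TV(P_1(·|s,a), P_2(·|s,a)). -/
open scoped BigOperators

/-- A (sub)stochastic transition kernel over finite state and action spaces. -/
def IsKernel {S A : Type*} [Fintype S] [Fintype A] (P : S → A → S → ℝ) : Prop :=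
  ∀ s a, (∀ s', 0 ≤ P s a s') ∧ ∑ s', P s a s' = 1

/-- A stationary stochastic policy. -/
def IsPolicy {S A : Type*} [Fintype S] [Fintype A] (π : S → A → ℝ) : Prop :=
  ∀ s, (∀ a, 0 ≤ π s a) ∧ ∑ a, π s a = 1

/-- A probability distribution on a finite set. -/
def IsDist {S : Type*} [Fintype S] (ρ : S → ℝ) : Prop :=
  (∀ s, 0 ≤ ρ s) ∧ ∑ s, ρ s = 1

/-- The state distribution at time `t` when following policy `π` under kernel `P`
starting from `ρ`. -/
noncomputable def stateDist {S A : Type*} [Fintype S] [Fintype A]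
    (P : S → A → S → ℝ) (π : S → A → ℝ) (ρ : S → ℝ) : ℕ → S → ℝ
  | 0 => ρ
  | (t + 1) => fun s' => ∑ s, ∑ a, stateDist P π ρ t s * π s a * P s a s'

/-- Expected discounted return `J_M(π) = E_π[∑_t γ^t r(s_t, a_t)]`. -/
noncomputable def Jret {S A : Type*} [Fintype S] [Fintype A]
    (P : S → A → S → ℝ) (r : S → A → ℝ) (ρ : S → ℝ) (γ : ℝ) (π : S → A → ℝ) : ℝ :=
  ∑' t : ℕ, γ ^ t * ∑ s, ∑ a, stateDist P π ρ t s * π s a * r s a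

/-- Total variation distance between two finite distributions (half the L1 distance). -/
noncomputable def tvFin {S : Type*} [Fintype S] (p q : S → ℝ) : ℝ :=
  (∑ s, |p s - q s|) / 2

/-- Auxiliary: state distributions remain distributions. -/
lemma stateDist_isDist {S A : Type*} [Fintype S] [Fintype A]
    (P : S → A → S → ℝ) (hP : IsKernel P) (π : S → A → ℝ) (hπ : IsPolicy π)
    (ρ : S → ℝ) (hρ : IsDist ρ) : ∀ t, IsDist (stateDist P π ρ t) := by
  intro t
  induction t with
  | zero => exact hρ
  | succ t ih =>
    constructor
    · intro s'
      apply Finset.sum_nonneg; intro s _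
      apply Finset.sum_nonneg; intro a _
      exact mul_nonneg (mul_nonneg (ih.1 s) ((hπ s).1 a)) ((hP s a).1 s')
    · show ∑ s', ∑ s, ∑ a, stateDist P π ρ t s * π s a * P s a s' = 1
      rw [Finset.sum_comm]
      have : ∀ s ∈ Finset.univ, (∑ s' : S, ∑ a, stateDist P π ρ t s * π s a * P s a s')
          = stateDist P π ρ t s := by
        intro s _
        rw [Finset.sum_comm]
        have : ∀ a ∈ Finset.univ, (∑ s' : S, stateDist P π ρ t s * π s a * P s a s')
            = stateDist P π ρ t s * π s a := by
          intro a _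
          rw [← Finset.mul_sum, (hP s a).2, mul_one]
        rw [Finset.sum_congr rfl this, ← Finset.mul_sum, (hπ s).2, mul_one]
      rw [Finset.sum_congr rfl this, ih.2]


/-- Policy-evaluation shift bound: for two MDPs differing only in transition kernels
`P₁`, `P₂`, with rewards bounded by `rmax` and discount `γ ∈ [0,1)`, any stationary
policy `π` satisfies
`|J_{M₁}(π) − J_{M₂}(π)| ≤ (2γ·rmax/(1−γ)²) · sup_{s,a} D_TV(P₁(·|s,a), P₂(·|s,a))`. -/
theorem return_gap_of_kernel_shift {S A : Type*} [Fintype S] [Fintype A]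
    [Nonempty S] [Nonempty A]
    (P₁ P₂ : S → A → S → ℝ) (hP₁ : IsKernel P₁) (hP₂ : IsKernel P₂)
    (r : S → A → ℝ) (rmax : ℝ) (hr : ∀ s a, |r s a| ≤ rmax)
    (ρ : S → ℝ) (hρ : IsDist ρ) (γ : ℝ) (hγ0 : 0 ≤ γ) (hγ1 : γ < 1)
    (π : S → A → ℝ) (hπ : IsPolicy π) :
    |Jret P₁ r ρ γ π - Jret P₂ r ρ γ π| ≤
      (2 * γ * rmax / (1 - γ) ^ 2) *
        ⨆ p : S × A, tvFin (P₁ p.1 p.2) (P₂ p.1 p.2) := by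
  set d := stateDist P₁ π ρ with hd_def
  set e := stateDist P₂ π ρ with he_def
  have hd := stateDist_isDist P₁ hP₁ π hπ ρ hρ
  have he := stateDist_isDist P₂ hP₂ π hπ ρ hρ
  set ε := ⨆ p : S × A, tvFin (P₁ p.1 p.2) (P₂ p.1 p.2) with hε_def
  have hbdd : BddAbove (Set.range fun p : S × A => tvFin (P₁ p.1 p.2) (P₂ p.1 p.2)) :=
    Set.Finite.bddAbove (Set.finite_range _)
  have hεge : ∀ s a, tvFin (P₁ s a) (P₂ s a) ≤ ε := fun s a => le_ciSup hbdd (s, a)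
  have htvnn : ∀ s a, (0:ℝ) ≤ tvFin (P₁ s a) (P₂ s a) := by
    intro s a
    apply div_nonneg _ (by norm_num)
    exact Finset.sum_nonneg fun s' _ => abs_nonneg _
  have hε0 : 0 ≤ ε := le_trans (htvnn (Classical.arbitrary S) (Classical.arbitrary A))
    (hεge _ _)
  have hrmax : 0 ≤ rmax := le_trans (abs_nonneg _)
    (hr (Classical.arbitrary S) (Classical.arbitrary A))
  -- TV bound on state distributions
  have hTV : ∀ t : ℕ, ∑ s, |d t s - e t s| ≤ 2 * t * ε := by
    intro t
    induction t with
    | zero => simp [hd_def, he_def, stateDist]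
    | succ t ih =>
      have step : ∑ s', |d (t+1) s' - e (t+1) s'| ≤ (∑ s, |d t s - e t s|) + 2 * ε := by
        have hterm : ∀ s', |d (t+1) s' - e (t+1) s'| ≤
            ∑ s, ∑ a, (|d t s - e t s| * π s a * P₁ s a s'
              + e t s * π s a * |P₁ s a s' - P₂ s a s'|) := by
          intro s'
          have heq : d (t+1) s' - e (t+1) s' =
              ∑ s, ∑ a, ((d t s - e t s) * π s a * P₁ s a s'
                + e t s * π s a * (P₁ s a s' - P₂ s a s')) := by
            show (∑ s, ∑ a, d t s * π s a * P₁ s a s')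
              - (∑ s, ∑ a, e t s * π s a * P₂ s a s') = _
            rw [← Finset.sum_sub_distrib]
            apply Finset.sum_congr rfl; intro s _
            rw [← Finset.sum_sub_distrib]
            apply Finset.sum_congr rfl; intro a _
            ring
          rw [heq]
          refine le_trans (Finset.abs_sum_le_sum_abs _ _) ?_
          apply Finset.sum_le_sum; intro s _
          refine le_trans (Finset.abs_sum_le_sum_abs _ _) ?_
          apply Finset.sum_le_sum; intro a _
          refine le_trans (abs_add_le _ _) ?_
          apply add_le_add
          · rw [abs_mul, abs_mul, abs_of_nonneg ((hπ s).1 a), abs_of_nonneg ((hP₁ s a).1 s')]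
          · rw [abs_mul, abs_mul, abs_of_nonneg (he t |>.1 s), abs_of_nonneg ((hπ s).1 a)]
        calc ∑ s', |d (t+1) s' - e (t+1) s'|
            ≤ ∑ s' : S, ∑ s, ∑ a, (|d t s - e t s| * π s a * P₁ s a s'
              + e t s * π s a * |P₁ s a s' - P₂ s a s'|) :=
              Finset.sum_le_sum fun s' _ => hterm s'
          _ = ∑ s, ∑ a, ((|d t s - e t s| * π s a)
              + e t s * π s a * (∑ s' : S, |P₁ s a s' - P₂ s a s'|)) := by
              rw [Finset.sum_comm]
              apply Finset.sum_congr rfl; intro s _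
              rw [Finset.sum_comm]
              apply Finset.sum_congr rfl; intro a _
              rw [Finset.sum_add_distrib, ← Finset.mul_sum, ← Finset.mul_sum,
                (hP₁ s a).2, mul_one]
          _ ≤ ∑ s, ∑ a, ((|d t s - e t s| * π s a) + e t s * π s a * (2 * ε)) := by
              apply Finset.sum_le_sum; intro s _
              apply Finset.sum_le_sum; intro a _
              apply add_le_add_right
              apply mul_le_mul_of_nonneg_left _
                (mul_nonneg (he t |>.1 s) ((hπ s).1 a))
              have := hεge s a
              rw [tvFin] at this
              linarith
          _ = (∑ s, |d t s - e t s|) + 2 * ε := by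
              have hinner : ∀ s ∈ Finset.univ,
                  ∑ a, (|d t s - e t s| * π s a + e t s * π s a * (2 * ε))
                    = |d t s - e t s| + e t s * (2 * ε) := by
                intro s _
                rw [Finset.sum_add_distrib, ← Finset.mul_sum, (hπ s).2, mul_one,
                  ← Finset.sum_mul, ← Finset.mul_sum, (hπ s).2, mul_one]
              rw [Finset.sum_congr rfl hinner, Finset.sum_add_distrib,
                ← Finset.sum_mul, (he t).2, one_mul]
      calc ∑ s', |d (t+1) s' - e (t+1) s'| ≤ (∑ s, |d t s - e t s|) + 2 * ε := step
        _ ≤ 2 * t * ε + 2 * ε := by linarith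
        _ = 2 * (t+1 : ℕ) * ε := by push_cast; ring
  -- per-step expected rewards
  set c₁ : ℕ → ℝ := fun t => ∑ s, ∑ a, d t s * π s a * r s a with hc₁
  set c₂ : ℕ → ℝ := fun t => ∑ s, ∑ a, e t s * π s a * r s a with hc₂
  have hcbound : ∀ (f : ℕ → S → ℝ), (∀ t, IsDist (f t)) →
      ∀ t, |∑ s, ∑ a, f t s * π s a * r s a| ≤ rmax := by
    intro f hf t
    calc |∑ s, ∑ a, f t s * π s a * r s a|
        ≤ ∑ s, ∑ a, |f t s * π s a * r s a| := by
          refine le_trans (Finset.abs_sum_le_sum_abs _ _) ?_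
          exact Finset.sum_le_sum fun s _ => Finset.abs_sum_le_sum_abs _ _
      _ ≤ ∑ s, ∑ a, f t s * π s a * rmax := by
          apply Finset.sum_le_sum; intro s _
          apply Finset.sum_le_sum; intro a _
          rw [abs_mul, abs_mul, abs_of_nonneg ((hf t).1 s), abs_of_nonneg ((hπ s).1 a)]
          exact mul_le_mul_of_nonneg_left (hr s a)
            (mul_nonneg ((hf t).1 s) ((hπ s).1 a))
      _ = rmax := by
          have hin : ∀ s ∈ Finset.univ, ∑ a, f t s * π s a * rmax = f t s * rmax := by
            intro s _
            rw [← Finset.sum_mul, ← Finset.mul_sum, (hπ s).2, mul_one]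
          rw [Finset.sum_congr rfl hin, ← Finset.sum_mul, (hf t).2, one_mul]
  have hgap : ∀ t : ℕ, |c₁ t - c₂ t| ≤ rmax * (2 * t * ε) := by
    intro t
    have heq : c₁ t - c₂ t = ∑ s, ∑ a, (d t s - e t s) * π s a * r s a := by
      rw [hc₁, hc₂, ← Finset.sum_sub_distrib]
      apply Finset.sum_congr rfl; intro s _
      rw [← Finset.sum_sub_distrib]
      apply Finset.sum_congr rfl; intro a _
      ring
    rw [heq]
    calc |∑ s, ∑ a, (d t s - e t s) * π s a * r s a|
        ≤ ∑ s, ∑ a, |d t s - e t s| * π s a * rmax := by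
          refine le_trans (Finset.abs_sum_le_sum_abs _ _) ?_
          apply Finset.sum_le_sum; intro s _
          refine le_trans (Finset.abs_sum_le_sum_abs _ _) ?_
          apply Finset.sum_le_sum; intro a _
          rw [abs_mul, abs_mul, abs_of_nonneg ((hπ s).1 a)]
          exact mul_le_mul_of_nonneg_left (hr s a)
            (mul_nonneg (abs_nonneg _) ((hπ s).1 a))
      _ = (∑ s, |d t s - e t s|) * rmax := by
          have hin : ∀ s ∈ Finset.univ,
              ∑ a, |d t s - e t s| * π s a * rmax = |d t s - e t s| * rmax := by
            intro s _
            rw [← Finset.sum_mul, ← Finset.mul_sum, (hπ s).2, mul_one]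
          rw [Finset.sum_congr rfl hin, ← Finset.sum_mul]
      _ ≤ (2 * t * ε) * rmax := mul_le_mul_of_nonneg_right (hTV t) hrmax
      _ = rmax * (2 * t * ε) := by ring
  -- summability
  have hγabs : ‖γ‖ < 1 := by rw [Real.norm_eq_abs, abs_of_nonneg hγ0]; exact hγ1
  have hsum1 : Summable (fun t : ℕ => γ ^ t * c₁ t) := by
    apply Summable.of_norm
    apply Summable.of_nonneg_of_le (fun t => norm_nonneg _)
      (f := fun t : ℕ => rmax * γ ^ t)
    · intro t
      rw [norm_mul, Real.norm_eq_abs, Real.norm_eq_abs, abs_pow, abs_of_nonneg hγ0,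
        mul_comm]
      exact mul_le_mul_of_nonneg_right (hcbound d hd t) (pow_nonneg hγ0 t)
    · exact (summable_geometric_of_lt_one hγ0 hγ1).mul_left rmax
  have hsum2 : Summable (fun t : ℕ => γ ^ t * c₂ t) := by
    apply Summable.of_norm
    apply Summable.of_nonneg_of_le (fun t => norm_nonneg _)
      (f := fun t : ℕ => rmax * γ ^ t)
    · intro t
      rw [norm_mul, Real.norm_eq_abs, Real.norm_eq_abs, abs_pow, abs_of_nonneg hγ0,
        mul_comm]
      exact mul_le_mul_of_nonneg_right (hcbound e he t) (pow_nonneg hγ0 t)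
    · exact (summable_geometric_of_lt_one hγ0 hγ1).mul_left rmax
  have hsumg : Summable (fun t : ℕ => (2 * rmax * ε) * ((t : ℝ) * γ ^ t)) := by
    have := summable_pow_mul_geometric_of_norm_lt_one 1 hγabs (R := ℝ)
    simp only [pow_one] at this
    exact this.mul_left _
  have hJ : Jret P₁ r ρ γ π - Jret P₂ r ρ γ π
      = ∑' t : ℕ, (γ ^ t * c₁ t - γ ^ t * c₂ t) := by
    rw [Summable.tsum_sub hsum1 hsum2]; rfl
  rw [hJ]
  have habs : |∑' t : ℕ, (γ ^ t * c₁ t - γ ^ t * c₂ t)|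
      ≤ ∑' t : ℕ, (2 * rmax * ε) * ((t : ℝ) * γ ^ t) := by
    have hbd : ∀ t : ℕ, |γ ^ t * c₁ t - γ ^ t * c₂ t|
        ≤ (2 * rmax * ε) * ((t : ℝ) * γ ^ t) := by
      intro t
      rw [← mul_sub, abs_mul, abs_pow, abs_of_nonneg hγ0]
      calc γ ^ t * |c₁ t - c₂ t| ≤ γ ^ t * (rmax * (2 * t * ε)) :=
            mul_le_mul_of_nonneg_left (hgap t) (pow_nonneg hγ0 t)
        _ = (2 * rmax * ε) * ((t : ℝ) * γ ^ t) := by ring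
    have hsumabs : Summable (fun t : ℕ => |γ ^ t * c₁ t - γ ^ t * c₂ t|) := by
      apply Summable.of_nonneg_of_le (fun t => abs_nonneg _) hbd hsumg
    calc |∑' t : ℕ, (γ ^ t * c₁ t - γ ^ t * c₂ t)|
        ≤ ∑' t : ℕ, |γ ^ t * c₁ t - γ ^ t * c₂ t| := by
          have := norm_tsum_le_tsum_norm (f := fun t : ℕ => γ ^ t * c₁ t - γ ^ t * c₂ t)
            (by simpa [Real.norm_eq_abs] using hsumabs)
          simpa [Real.norm_eq_abs] using this
      _ ≤ ∑' t : ℕ, (2 * rmax * ε) * ((t : ℝ) * γ ^ t) :=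
          Summable.tsum_le_tsum hbd hsumabs hsumg
  refine habs.trans ?_
  rw [tsum_mul_left, tsum_coe_mul_geometric_of_norm_lt_one hγabs]
  have h1γ : (1 - γ) ^ 2 ≠ 0 := pow_ne_zero 2 (by linarith)
  field_simp
  ring_nf
  apply le_of_eq
  ring
end

section
/- For the optimal value functions V*_1 and V*_2 of two finite discounted MDPs differing only in transition kernels P_1 and P_2, with rewards bounded by r_max and discount γ ∈ [0,1), one has max_s |V*_1(s) − V*_2(s)| ≤ (2·r_max/(1−γ)²)·sup_{s,a} D_TV(P_1(·|s,a), P_2(·|s,a)). -/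
open scoped BigOperators

lemma abs_ciSup_sub_ciSup_le {ι : Type*} [Fintype ι] [Nonempty ι] (f g : ι → ℝ) :
    |(⨆ i, f i) - ⨆ i, g i| ≤ ⨆ i, |f i - g i| := by
  have hbf : BddAbove (Set.range f) := (Set.finite_range f).bddAbove
  have hbg : BddAbove (Set.range g) := (Set.finite_range g).bddAbove
  have hbd : BddAbove (Set.range fun i => |f i - g i|) := (Set.finite_range _).bddAbove
  rw [abs_sub_le_iff]
  constructor
  · rw [sub_le_iff_le_add]
    refine ciSup_le fun i => ?_
    have h1 : f i ≤ |f i - g i| + g i := by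
      have := le_abs_self (f i - g i); linarith
    exact h1.trans (add_le_add (le_ciSup hbd i) (le_ciSup hbg i))
  · rw [sub_le_iff_le_add]
    refine ciSup_le fun i => ?_
    have h1 : g i ≤ |f i - g i| + f i := by
      have := neg_abs_le (f i - g i); linarith
    exact h1.trans (add_le_add (le_ciSup hbd i) (le_ciSup hbf i))

/-- Optimal-value-function shift bound: if `V₁`, `V₂` satisfy the Bellman optimality
equations for kernels `P₁`, `P₂` with common reward bounded by `rmax` and discount
`γ ∈ [0,1)`, and are bounded by `rmax/(1−γ)`, then
`max_s |V₁(s) − V₂(s)| ≤ (2·rmax/(1−γ)²) · sup_{s,a} D_TV(P₁(·|s,a), P₂(·|s,a))`. -/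
theorem optimal_value_gap_of_kernel_shift {S A : Type*} [Fintype S] [Fintype A]
    [Nonempty S] [Nonempty A]
    (P₁ P₂ : S → A → S → ℝ) (hP₁ : IsKernel P₁) (hP₂ : IsKernel P₂)
    (r : S → A → ℝ) (rmax : ℝ) (hr : ∀ s a, |r s a| ≤ rmax)
    (γ : ℝ) (hγ0 : 0 ≤ γ) (hγ1 : γ < 1)
    (V₁ V₂ : S → ℝ)
    (hbell₁ : ∀ s, V₁ s = ⨆ a : A, (r s a + γ * ∑ s', P₁ s a s' * V₁ s'))
    (hbell₂ : ∀ s, V₂ s = ⨆ a : A, (r s a + γ * ∑ s', P₂ s a s' * V₂ s'))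
    (hb₁ : ∀ s, |V₁ s| ≤ rmax / (1 - γ)) (hb₂ : ∀ s, |V₂ s| ≤ rmax / (1 - γ)) :
    (⨆ s : S, |V₁ s - V₂ s|) ≤
      (2 * rmax / (1 - γ) ^ 2) *
        ⨆ p : S × A, tvFin (P₁ p.1 p.2) (P₂ p.1 p.2) := by
  obtain ⟨s₀⟩ := (inferInstance : Nonempty S)
  obtain ⟨a₀⟩ := (inferInstance : Nonempty A)
  have h1γ : (0:ℝ) < 1 - γ := by linarith
  have hrmax : 0 ≤ rmax := (abs_nonneg _).trans (hr s₀ a₀)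
  set C : ℝ := rmax / (1 - γ) with hC
  have hC0 : 0 ≤ C := div_nonneg hrmax h1γ.le
  set D : ℝ := ⨆ s : S, |V₁ s - V₂ s| with hD
  set T : ℝ := ⨆ p : S × A, tvFin (P₁ p.1 p.2) (P₂ p.1 p.2) with hT
  have hbD : BddAbove (Set.range fun s : S => |V₁ s - V₂ s|) := (Set.finite_range _).bddAbove
  have hbT : BddAbove (Set.range fun p : S × A => tvFin (P₁ p.1 p.2) (P₂ p.1 p.2)) :=
    (Set.finite_range _).bddAbove
  have hDle : ∀ s, |V₁ s - V₂ s| ≤ D := fun s => le_ciSup hbD s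
  have hTle : ∀ s a, tvFin (P₁ s a) (P₂ s a) ≤ T := fun s a => le_ciSup hbT (s, a)
  have hT0 : 0 ≤ T := by
    refine le_trans ?_ (hTle s₀ a₀)
    unfold tvFin
    positivity
  -- key pointwise bound
  have key : ∀ s : S, |V₁ s - V₂ s| ≤ γ * D + γ * (2 * C * T) := by
    intro s
    rw [hbell₁ s, hbell₂ s]
    refine (abs_ciSup_sub_ciSup_le _ _).trans (ciSup_le fun a => ?_)
    have hsimp : (r s a + γ * ∑ s', P₁ s a s' * V₁ s') -
        (r s a + γ * ∑ s', P₂ s a s' * V₂ s') =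
        γ * ((∑ s', P₁ s a s' * (V₁ s' - V₂ s')) + ∑ s', (P₁ s a s' - P₂ s a s') * V₂ s') := by
      rw [← Finset.sum_add_distrib]
      have : ∀ s' : S, P₁ s a s' * (V₁ s' - V₂ s') + (P₁ s a s' - P₂ s a s') * V₂ s'
          = P₁ s a s' * V₁ s' - P₂ s a s' * V₂ s' := fun s' => by ring
      simp_rw [this, Finset.sum_sub_distrib]
      ring
    rw [hsimp, abs_mul, abs_of_nonneg hγ0]
    have h2 : |∑ s', P₁ s a s' * (V₁ s' - V₂ s')| ≤ D := by
      refine (Finset.abs_sum_le_sum_abs _ _).trans ?_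
      have : ∀ s' ∈ Finset.univ, |P₁ s a s' * (V₁ s' - V₂ s')| ≤ P₁ s a s' * D := by
        intro s' _
        rw [abs_mul, abs_of_nonneg ((hP₁ s a).1 s')]
        exact mul_le_mul_of_nonneg_left (hDle s') ((hP₁ s a).1 s')
      refine (Finset.sum_le_sum this).trans ?_
      rw [← Finset.sum_mul, (hP₁ s a).2, one_mul]
    have h3 : |∑ s', (P₁ s a s' - P₂ s a s') * V₂ s'| ≤ 2 * C * T := by
      refine (Finset.abs_sum_le_sum_abs _ _).trans ?_
      have : ∀ s' ∈ Finset.univ, |(P₁ s a s' - P₂ s a s') * V₂ s'| ≤ |P₁ s a s' - P₂ s a s'| * C := by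
        intro s' _
        rw [abs_mul]
        exact mul_le_mul_of_nonneg_left (hb₂ s') (abs_nonneg _)
      refine (Finset.sum_le_sum this).trans ?_
      rw [← Finset.sum_mul]
      have htv : (∑ s', |P₁ s a s' - P₂ s a s'|) = 2 * tvFin (P₁ s a) (P₂ s a) := by
        unfold tvFin; ring
      rw [htv]
      calc 2 * tvFin (P₁ s a) (P₂ s a) * C ≤ 2 * T * C := by
            have := hTle s a
            nlinarith
        _ = 2 * C * T := by ring
    calc γ * |(∑ s', P₁ s a s' * (V₁ s' - V₂ s')) + ∑ s', (P₁ s a s' - P₂ s a s') * V₂ s'|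
        ≤ γ * (D + 2 * C * T) := by
          refine mul_le_mul_of_nonneg_left ?_ hγ0
          exact (abs_add_le _ _).trans (add_le_add h2 h3)
      _ = γ * D + γ * (2 * C * T) := by ring
  have hDbound : D ≤ γ * D + γ * (2 * C * T) := ciSup_le key
  have hfin : D ≤ 2 * C * T / (1 - γ) := by
    rw [le_div_iff₀ h1γ]
    nlinarith [mul_nonneg (mul_nonneg (by norm_num : (0:ℝ) ≤ 2) hC0) hT0]
  refine hfin.trans (le_of_eq ?_)
  rw [hC]
  field_simp
end

section
/- Let Q: S×A → ℝ and V: S → ℝ be bounded functions satisfying V(s) = E_{a∼π*(·|s)}[Q(s,a)] for an optimal policy π*, and define the advantage A(s,a) = Q(s,a) − V(s). Then for any policy μ with state-occupancy measure d^μ in a γ-discounted MDP, the performance difference satisfies J(μ) − J(π*) = (1/(1−γ))·E_{(s,a)∼d^μ}[A(s,a)] where A is the advantage of π* (performance difference lemma). -/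
open scoped BigOperators

section helpers
variable {S A : Type*} [Fintype S] [Fintype A]

lemma stateDist_nonneg (P : S → A → S → ℝ) (hP : IsKernel P)
    (π : S → A → ℝ) (hπ : IsPolicy π) (ρ : S → ℝ) (hρ0 : ∀ s, 0 ≤ ρ s) :
    ∀ t s, 0 ≤ stateDist P π ρ t s := by
  intro t
  induction t with
  | zero => exact hρ0
  | succ t ih =>
    intro s'
    apply Finset.sum_nonneg; intro s _
    apply Finset.sum_nonneg; intro a _
    exact mul_nonneg (mul_nonneg (ih s) ((hπ s).1 a)) ((hP s a).1 s')

lemma stateDist_sum_one (P : S → A → S → ℝ) (hP : IsKernel P)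
    (π : S → A → ℝ) (hπ : IsPolicy π) (ρ : S → ℝ) (hρ1 : ∑ s, ρ s = 1) :
    ∀ t, ∑ s, stateDist P π ρ t s = 1 := by
  intro t
  induction t with
  | zero => exact hρ1
  | succ t ih =>
    show ∑ s', ∑ s, ∑ a, stateDist P π ρ t s * π s a * P s a s' = 1
    rw [Finset.sum_comm]
    have : ∀ s, ∑ s', ∑ a, stateDist P π ρ t s * π s a * P s a s'
        = stateDist P π ρ t s := by
      intro s
      rw [Finset.sum_comm]
      have h1 : ∀ a, ∑ s', stateDist P π ρ t s * π s a * P s a s'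
          = stateDist P π ρ t s * π s a := by
        intro a
        rw [← Finset.mul_sum, (hP s a).2, mul_one]
      simp_rw [h1, ← Finset.mul_sum, (hπ s).2, mul_one]
    simp_rw [this, ih]

lemma abs_expect1_le (d : S → ℝ) (hd0 : ∀ s, 0 ≤ d s) (hd1 : ∑ s, d s = 1)
    (V : S → ℝ) (C : ℝ) (hVb : ∀ s, |V s| ≤ C) :
    |∑ s, d s * V s| ≤ C := by
  calc |∑ s, d s * V s| ≤ ∑ s, |d s * V s| := Finset.abs_sum_le_sum_abs _ _
    _ ≤ ∑ s, d s * C := by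
        apply Finset.sum_le_sum; intro s _
        rw [abs_mul, abs_of_nonneg (hd0 s)]
        exact mul_le_mul_of_nonneg_left (hVb s) (hd0 s)
    _ = C := by rw [← Finset.sum_mul, hd1, one_mul]

lemma abs_expect_le (d : S → ℝ) (hd0 : ∀ s, 0 ≤ d s) (hd1 : ∑ s, d s = 1)
    (π : S → A → ℝ) (hπ : IsPolicy π) (x : S → A → ℝ) (C : ℝ)
    (hx : ∀ s a, |x s a| ≤ C) :
    |∑ s, ∑ a, d s * π s a * x s a| ≤ C := by
  have key : ∀ s, |∑ a, π s a * x s a| ≤ C := by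
    intro s
    exact abs_expect1_le (π s) (hπ s).1 (hπ s).2 (x s) C (hx s)
  have : ∀ s, ∑ a, d s * π s a * x s a = d s * ∑ a, π s a * x s a := by
    intro s; rw [Finset.mul_sum]; apply Finset.sum_congr rfl; intros; ring
  simp_rw [this]
  exact abs_expect1_le d hd0 hd1 _ C key

lemma summable_geom_bound (γ : ℝ) (hγ0 : 0 ≤ γ) (hγ1 : γ < 1) (c : ℕ → ℝ) (C : ℝ)
    (hc : ∀ t, |c t| ≤ C) : Summable (fun t => γ ^ t * c t) := by
  apply Summable.of_norm_bounded (g := fun t => C * γ ^ t)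
    ((summable_geometric_of_lt_one hγ0 hγ1).mul_left C)
  intro t
  rw [Real.norm_eq_abs, abs_mul, abs_pow, abs_of_nonneg hγ0, mul_comm]
  exact mul_le_mul_of_nonneg_right (hc t) (pow_nonneg hγ0 t)

lemma tsum_telescope_real (g : ℕ → ℝ) (hg : Summable g) :
    ∑' t : ℕ, (g t - g (t + 1)) = g 0 := by
  have hg1 : Summable (fun t => g (t + 1)) := (summable_nat_add_iff 1).2 hg
  rw [Summable.tsum_sub hg hg1, Summable.tsum_eq_zero_add hg]
  ring

end helpers


section decomp
variable {S A : Type*} [Fintype S] [Fintype A]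

set_option maxHeartbeats 1000000 in
lemma Jret_decomp (P : S → A → S → ℝ) (hP : IsKernel P)
    (r : S → A → ℝ) (ρ : S → ℝ) (hρ : IsDist ρ)
    (γ : ℝ) (hγ0 : 0 ≤ γ) (hγ1 : γ < 1)
    (π : S → A → ℝ) (hπ : IsPolicy π)
    (Q : S → A → ℝ) (V : S → ℝ) (Qmax : ℝ)
    (hQb : ∀ s a, |Q s a| ≤ Qmax) (hVb : ∀ s, |V s| ≤ Qmax)
    (hbellQ : ∀ s a, Q s a = r s a + γ * ∑ s', P s a s' * V s') :
    Jret P r ρ γ π =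
      (∑' t : ℕ, γ ^ t * ∑ s, ∑ a, stateDist P π ρ t s * π s a * (Q s a - V s))
        + ∑ s, ρ s * V s := by
  have hd0 := stateDist_nonneg P hP π hπ ρ hρ.1
  have hd1 := stateDist_sum_one P hP π hπ ρ hρ.2
  have hr : ∀ s a, r s a = Q s a - γ * ∑ s', P s a s' * V s' := by
    intro s a; have := hbellQ s a; linarith
  have key : ∀ t s, ∑ a, stateDist P π ρ t s * π s a * V s
      = stateDist P π ρ t s * V s := by
    intro t s
    have h : ∀ a ∈ Finset.univ, stateDist P π ρ t s * π s a * V s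
        = (stateDist P π ρ t s * V s) * π s a := by intros; ring
    rw [Finset.sum_congr rfl h, ← Finset.mul_sum, (hπ s).2, mul_one]
  have h3 : ∀ t, ∑ s', stateDist P π ρ (t + 1) s' * V s'
      = ∑ s, ∑ a, stateDist P π ρ t s * π s a * (∑ s', P s a s' * V s') := by
    intro t
    have hdd : ∀ s', stateDist P π ρ (t + 1) s'
        = ∑ s, ∑ a, stateDist P π ρ t s * π s a * P s a s' := fun _ => rfl
    simp_rw [hdd, Finset.sum_mul, Finset.mul_sum, mul_assoc]
    rw [Finset.sum_comm]
    exact Finset.sum_congr rfl fun s _ => by rw [Finset.sum_comm]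
  have h_id : ∀ t, ∑ s, ∑ a, stateDist P π ρ t s * π s a * r s a
      = (∑ s, ∑ a, stateDist P π ρ t s * π s a * (Q s a - V s))
        + (∑ s, stateDist P π ρ t s * V s)
        - γ * ∑ s', stateDist P π ρ (t + 1) s' * V s' := by
    intro t
    rw [h3 t]
    have h2 : ∑ s, stateDist P π ρ t s * V s
        = ∑ s, ∑ a, stateDist P π ρ t s * π s a * V s :=
      Finset.sum_congr rfl fun s _ => (key t s).symm
    rw [h2]
    have expand : ∀ s a, stateDist P π ρ t s * π s a * r s a
        = stateDist P π ρ t s * π s a * (Q s a - V s)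
          + stateDist P π ρ t s * π s a * V s
          - γ * (stateDist P π ρ t s * π s a * ∑ s', P s a s' * V s') := by
      intro s a; rw [hr s a]; ring
    calc ∑ s, ∑ a, stateDist P π ρ t s * π s a * r s a
        = ∑ s, ∑ a, (stateDist P π ρ t s * π s a * (Q s a - V s)
            + stateDist P π ρ t s * π s a * V s
            - γ * (stateDist P π ρ t s * π s a * ∑ s', P s a s' * V s')) :=
          Finset.sum_congr rfl fun s _ => Finset.sum_congr rfl fun a _ => expand s a
      _ = (∑ s, ∑ a, stateDist P π ρ t s * π s a * (Q s a - V s))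
            + (∑ s, ∑ a, stateDist P π ρ t s * π s a * V s)
            - γ * ∑ s, ∑ a, stateDist P π ρ t s * π s a * ∑ s', P s a s' * V s' := by
          simp [Finset.sum_add_distrib, Finset.sum_sub_distrib, Finset.mul_sum]
  have hAb : ∀ t, |∑ s, ∑ a, stateDist P π ρ t s * π s a * (Q s a - V s)| ≤ 2 * Qmax := by
    intro t
    apply abs_expect_le _ (hd0 t) (hd1 t) π hπ _ _
    intro s a
    have h : |Q s a - V s| ≤ |Q s a| + |V s| := abs_sub _ _
    have h1 := hQb s a
    have h2 := hVb s
    linarith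
  have hfb : ∀ t, |∑ s, stateDist P π ρ t s * V s| ≤ Qmax :=
    fun t => abs_expect1_le _ (hd0 t) (hd1 t) V Qmax hVb
  have hSumA : Summable (fun t => γ ^ t * ∑ s, ∑ a,
      stateDist P π ρ t s * π s a * (Q s a - V s)) :=
    summable_geom_bound γ hγ0 hγ1 _ _ hAb
  have hSumg : Summable (fun t => γ ^ t * ∑ s, stateDist P π ρ t s * V s) :=
    summable_geom_bound γ hγ0 hγ1 _ _ hfb
  have hg1 : Summable (fun t => γ ^ (t + 1) * ∑ s, stateDist P π ρ (t + 1) s * V s) :=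
    (summable_nat_add_iff 1).2 hSumg
  have htel := tsum_telescope_real (fun n => γ ^ n * ∑ s, stateDist P π ρ n s * V s) hSumg
  calc Jret P r ρ γ π
      = ∑' t : ℕ, ((γ ^ t * ∑ s, ∑ a, stateDist P π ρ t s * π s a * (Q s a - V s))
          + (γ ^ t * ∑ s, stateDist P π ρ t s * V s
             - γ ^ (t + 1) * ∑ s, stateDist P π ρ (t + 1) s * V s)) := by
        apply tsum_congr; intro t
        show γ ^ t * ∑ s, ∑ a, stateDist P π ρ t s * π s a * r s a = _
        rw [h_id t]; ring
    _ = (∑' t : ℕ, γ ^ t * ∑ s, ∑ a, stateDist P π ρ t s * π s a * (Q s a - V s))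
          + ∑' t : ℕ, (γ ^ t * ∑ s, stateDist P π ρ t s * V s
             - γ ^ (t + 1) * ∑ s, stateDist P π ρ (t + 1) s * V s) :=
        Summable.tsum_add hSumA (hSumg.sub hg1)
    _ = _ := by
        rw [htel]
        norm_num [stateDist]

end decomp


/-- Performance difference lemma (Kakade & Langford, 2002). If `Q`, `V` are the value
functions of an optimal policy `π⋆` (i.e. they satisfy the policy-evaluation Bellman
equations for `π⋆`, with `V s = E_{a∼π⋆(·|s)}[Q s a]`) and `A(s,a) = Q(s,a) − V(s)` is
its advantage function, then for any policy `μ` with normalized discounted occupancy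
measure `d^μ(s,a) = (1−γ)·∑_t γ^t·Pr(s_t=s)·μ(a|s)`:
`J(μ) − J(π⋆) = (1/(1−γ)) · E_{(s,a)∼d^μ}[A(s,a)]`. -/
theorem performance_difference_lemma {S A : Type*} [Fintype S] [Fintype A]
    (P : S → A → S → ℝ) (hP : IsKernel P)
    (r : S → A → ℝ) (ρ : S → ℝ) (hρ : IsDist ρ)
    (γ : ℝ) (hγ0 : 0 ≤ γ) (hγ1 : γ < 1)
    (πstar μ : S → A → ℝ) (hπstar : IsPolicy πstar) (hμ : IsPolicy μ)
    (Q : S → A → ℝ) (V : S → ℝ) (Qmax : ℝ)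
    (hQb : ∀ s a, |Q s a| ≤ Qmax) (hVb : ∀ s, |V s| ≤ Qmax)
    (hbellQ : ∀ s a, Q s a = r s a + γ * ∑ s', P s a s' * V s')
    (hV : ∀ s, V s = ∑ a, πstar s a * Q s a) :
    Jret P r ρ γ μ - Jret P r ρ γ πstar =
      (1 / (1 - γ)) * ∑ s, ∑ a,
        ((1 - γ) * ∑' t : ℕ, γ ^ t * stateDist P μ ρ t s * μ s a) *
          (Q s a - V s) := by
  have hd0 := stateDist_nonneg P hP μ hμ ρ hρ.1
  have hd1 := stateDist_sum_one P hP μ hμ ρ hρ.2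
  have hne : (1:ℝ) - γ ≠ 0 := by linarith
  have hJμ := Jret_decomp P hP r ρ hρ γ hγ0 hγ1 μ hμ Q V Qmax hQb hVb hbellQ
  have hJs := Jret_decomp P hP r ρ hρ γ hγ0 hγ1 πstar hπstar Q V Qmax hQb hVb hbellQ
  have hzero : ∀ t, ∑ s, ∑ a, stateDist P πstar ρ t s * πstar s a * (Q s a - V s) = 0 := by
    intro t
    have h1 : ∀ s, ∑ a, πstar s a * (Q s a - V s) = 0 := by
      intro s
      have h : ∑ a, πstar s a * (Q s a - V s)
          = (∑ a, πstar s a * Q s a) - (∑ a, πstar s a) * V s := by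
        rw [Finset.sum_mul, ← Finset.sum_sub_distrib]
        apply Finset.sum_congr rfl; intros; ring
      rw [h, ← hV s, (hπstar s).2, one_mul, sub_self]
    have h2 : ∀ s, ∑ a, stateDist P πstar ρ t s * πstar s a * (Q s a - V s)
        = stateDist P πstar ρ t s * ∑ a, πstar s a * (Q s a - V s) := by
      intro s; rw [Finset.mul_sum]; apply Finset.sum_congr rfl; intros; ring
    simp [h2, h1]
  rw [hJμ, hJs]
  simp only [hzero, mul_zero, tsum_zero, zero_add]
  rw [add_sub_cancel_right]
  -- summability facts
  have hsum_sa : ∀ s a, Summable (fun t => γ ^ t * (stateDist P μ ρ t s * μ s a)) := by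
    intro s a
    apply summable_geom_bound γ hγ0 hγ1 _ (μ s a)
    intro t
    rw [abs_mul, abs_of_nonneg (hd0 t s), abs_of_nonneg ((hμ s).1 a)]
    have hle1 : stateDist P μ ρ t s ≤ 1 := by
      rw [← hd1 t]; exact Finset.single_le_sum (fun i _ => hd0 t i) (Finset.mem_univ s)
    nlinarith [(hμ s).1 a]
  have hF : ∀ s a, Summable (fun t => γ ^ t * stateDist P μ ρ t s * μ s a * (Q s a - V s)) := by
    intro s a
    have h := (hsum_sa s a).mul_right (Q s a - V s)
    simpa [mul_assoc] using h
  have hcancel : ∀ x : ℝ, (1 / (1 - γ)) * ((1 - γ) * x) = x := by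
    intro x; field_simp
  symm
  calc (1 / (1 - γ)) * ∑ s, ∑ a,
        ((1 - γ) * ∑' t : ℕ, γ ^ t * stateDist P μ ρ t s * μ s a) * (Q s a - V s)
      = ∑ s, ∑ a, (∑' t : ℕ, γ ^ t * stateDist P μ ρ t s * μ s a) * (Q s a - V s) := by
        rw [Finset.mul_sum]
        apply Finset.sum_congr rfl; intro s _
        rw [Finset.mul_sum]
        apply Finset.sum_congr rfl; intro a _
        rw [mul_assoc (1 - γ)]
        exact hcancel _
    _ = ∑ s, ∑ a, ∑' t : ℕ, γ ^ t * stateDist P μ ρ t s * μ s a * (Q s a - V s) := by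
        apply Finset.sum_congr rfl; intro s _
        apply Finset.sum_congr rfl; intro a _
        exact tsum_mul_right.symm
    _ = ∑ s, ∑' t : ℕ, ∑ a, γ ^ t * stateDist P μ ρ t s * μ s a * (Q s a - V s) := by
        apply Finset.sum_congr rfl; intro s _
        exact (Summable.tsum_finsetSum (fun a _ => hF s a)).symm
    _ = ∑' t : ℕ, ∑ s, ∑ a, γ ^ t * stateDist P μ ρ t s * μ s a * (Q s a - V s) := by
        exact (Summable.tsum_finsetSum (fun s _ => summable_sum (fun a _ => hF s a))).symm
    _ = ∑' t : ℕ, γ ^ t * ∑ s, ∑ a, stateDist P μ ρ t s * μ s a * (Q s a - V s) := by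
        apply tsum_congr; intro t
        rw [Finset.mul_sum]
        apply Finset.sum_congr rfl; intro s _
        rw [Finset.mul_sum]
        apply Finset.sum_congr rfl; intro a _
        ring
end
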